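/- arXiv:2503.23180 — 4 statements merged into one kernel-verified Lean document; each statement's English description precedes it below -/
import Mathlib

section
/- Let 0 < β < 1, K > 0, A = (1+β)/(Kβ), and for s ∈ [0,1) set F(u,s) = 1 - (1-s)(1 + u(1-s)^β/A)^{-1/β}. If γ = β, then for all t ≥ 0, exp(-θ ∫_0^t (1 - F(u,s))^γ du) = (1 + t(1-s)^β/A)^{-θA}. -/
open Real intervalIntegral

/-!
With `c = (1 - s) ^ β`, the exponent `γ = β` cancels the power `-1 / β` in `1 - F u s`, so the
integrand is `c / (1 + u c / A)`. Its integral over `[0, t]` is `A log (1 + t c / A)`, and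
`exp (-θ A log x) = x ^ (-θ A)`.
-/

lemma integral_inv_one_add_mul {b t : ℝ} (hb : b ≠ 0) (ht : 0 < 1 + b * t) :
    ∫ u in (0:ℝ)..t, (1 + b * u)⁻¹ = b⁻¹ * log (1 + b * t) := by
  have h := integral_comp_mul_add (a := 0) (b := t) (fun x : ℝ => x⁻¹) hb 1
  simp only [mul_zero, zero_add, smul_eq_mul] at h
  have hcomm : ∀ u, 1 + b * u = b * u + 1 := fun u => add_comm _ _
  simp only [hcomm]
  rw [h, integral_inv_of_pos one_pos (by linarith), div_one]

lemma mul_rpow_neg_one_div_rpow {x y β : ℝ} (hx : 0 ≤ x) (hy : 0 ≤ y) (hβ : β ≠ 0) :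
    (x * y ^ (-1 / β)) ^ β = x ^ β * y⁻¹ := by
  rw [mul_rpow hx (rpow_nonneg hy _), ← rpow_mul hy, div_mul_cancel₀ _ hβ, rpow_neg_one]

theorem pgf_immigration_gamma_eq_beta_general
    (β γ K θ A : ℝ) (hβ : 0 < β) (hK : 0 < K)
    (hA : A = (1 + β) / (K * β)) (hγβ : γ = β)
    (F : ℝ → ℝ → ℝ)
    (hF : ∀ u s, F u s = 1 - (1 - s) * (1 + u * (1 - s) ^ β / A) ^ (-1 / β)) :
    ∀ s ∈ Set.Ico (0:ℝ) 1, ∀ t : ℝ, 0 ≤ t →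
      Real.exp (-θ * ∫ u in (0:ℝ)..t, (1 - F u s) ^ γ)
        = (1 + t * (1 - s) ^ β / A) ^ (-(θ * A)) := by
  intro s hs t ht
  have hA0 : 0 < A := hA ▸ by positivity
  have hs1 : 0 < 1 - s := by linarith [hs.2]
  have hc : 0 < (1 - s) ^ β := rpow_pos_of_pos hs1 β
  set c := (1 - s) ^ β
  have hintegrand : ∀ u ∈ Set.uIcc 0 t, (1 - F u s) ^ γ = c * (1 + c / A * u)⁻¹ := by
    intro u hu
    rw [Set.uIcc_of_le ht] at hu
    have hu0 := hu.1
    rw [hF, hγβ, sub_sub_cancel,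
      mul_rpow_neg_one_div_rpow hs1.le (by positivity) hβ.ne']
    ring
  have hintegral : ∫ u in (0:ℝ)..t, (1 - F u s) ^ γ = A * log (1 + t * c / A) := by
    rw [integral_congr hintegrand, integral_const_mul,
      integral_inv_one_add_mul (by positivity) (by positivity)]
    field_simp
  rw [hintegral, rpow_def_of_pos (by positivity)]
  ring_nf

theorem pgf_immigration_gamma_eq_beta
    (β γ K θ A : ℝ) (hβ : 0 < β) (hβ1 : β < 1) (hK : 0 < K) (hθ : 0 < θ)
    (hA : A = (1 + β) / (K * β)) (hγβ : γ = β)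
    (F : ℝ → ℝ → ℝ)
    (hF : ∀ u s, F u s = 1 - (1 - s) * (1 + u * (1 - s) ^ β / A) ^ (-1 / β)) :
    ∀ s ∈ Set.Ico (0:ℝ) 1, ∀ t : ℝ, 0 ≤ t →
      Real.exp (-θ * ∫ u in (0:ℝ)..t, (1 - F u s) ^ γ)
        = (1 + t * (1 - s) ^ β / A) ^ (-(θ * A)) :=
  pgf_immigration_gamma_eq_beta_general β γ K θ A hβ hK hA hγβ F hF
end

section
/- Let 0 < β < 1, 0 < γ < 1, θ > 0, K > 0, A = (1+β)/(Kβ), δ = γ/β, B(t,s) = 1+t(1-s)^β/A, φ(s) = θ(1-s)^γ, f(s) = (1-s)^{1+β}/(Aβ), and Φ(t,s) = exp( -θA(1-s)^{γ-β}(B(t,s)^{1-δ}-1)/(1-δ) ) for γ ≠ β. Then for s ∈ [0,1) and t > 0, ∂Φ/∂t(t,s) = -φ(s)Φ(t,s) + f(s)·∂Φ/∂s(t,s). -/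
open Real

set_option maxHeartbeats 2000000 in
theorem forward_kolmogorov_pde
    (β γ θ K A δ : ℝ) (hβ : 0 < β) (hβ1 : β < 1) (hγ : 0 < γ) (hγ1 : γ < 1)
    (hne : γ ≠ β) (hθ : 0 < θ) (hK : 0 < K)
    (hA : A = (1 + β) / (K * β)) (hδ : δ = γ / β)
    (B Φ : ℝ → ℝ → ℝ) (φ f : ℝ → ℝ)
    (hB : ∀ t s, B t s = 1 + t * (1 - s) ^ β / A)
    (hΦ : ∀ t s, Φ t s = Real.exp (-(θ * A) * (1 - s) ^ (γ - β) * ((B t s ^ (1 - δ) - 1) / (1 - δ))))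
    (hφ : ∀ s, φ s = θ * (1 - s) ^ γ)
    (hf : ∀ s, f s = (1 - s) ^ (1 + β) / (A * β)) :
    ∀ s ∈ Set.Ico (0:ℝ) 1, ∀ t : ℝ, 0 < t →
      ∃ D : ℝ, HasDerivAt (fun s' => Φ t s') D s ∧
        HasDerivAt (fun t' => Φ t' s) (-φ s * Φ t s + f s * D) t := by
  intro s hs t ht
  have hu : 0 < 1 - s := by linarith [hs.2]
  have hA0 : 0 < A := by rw [hA]; positivity
  have hE0 : 0 < 1 + t * (1 - s) ^ β / A := by positivity
  have hδ1 : (1:ℝ) - δ ≠ 0 := by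
    rw [hδ]
    intro h
    apply hne
    have : γ / β = 1 := by linarith
    field_simp at this
    linarith
  -- s-derivative
  have h1 : HasDerivAt (fun s' : ℝ => 1 - s') (-1) s := by
    simpa using (hasDerivAt_id s).const_sub 1
  have h2 : HasDerivAt (fun s' : ℝ => (1 - s') ^ (γ - β))
      (-1 * (γ - β) * (1 - s) ^ (γ - β - 1)) s := h1.rpow_const (Or.inl hu.ne')
  have h3 : HasDerivAt (fun s' : ℝ => (1 - s') ^ β)
      (-1 * β * (1 - s) ^ (β - 1)) s := h1.rpow_const (Or.inl hu.ne')
  have h4 : HasDerivAt (fun s' : ℝ => 1 + t * (1 - s') ^ β / A)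
      (t * (-1 * β * (1 - s) ^ (β - 1)) / A) s :=
    ((h3.const_mul t).div_const A).const_add 1
  have h5 : HasDerivAt (fun s' : ℝ => (1 + t * (1 - s') ^ β / A) ^ (1 - δ))
      ((t * (-1 * β * (1 - s) ^ (β - 1)) / A) * (1 - δ) * (1 + t * (1 - s) ^ β / A) ^ (1 - δ - 1)) s :=
    h4.rpow_const (Or.inl hE0.ne')
  have h6 := (h5.sub_const 1).div_const (1 - δ)
  have h7 := (h2.const_mul (-(θ * A))).mul h6
  have h8 := h7.exp
  refine ⟨rexp (-(θ * A) * (1 - s) ^ (γ - β) * (((1 + t * (1 - s) ^ β / A) ^ (1 - δ) - 1) / (1 - δ))) *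
      (-(θ * A) * (-1 * (γ - β) * (1 - s) ^ (γ - β - 1)) * (((1 + t * (1 - s) ^ β / A) ^ (1 - δ) - 1) / (1 - δ)) +
        -(θ * A) * (1 - s) ^ (γ - β) *
          (t * (-1 * β * (1 - s) ^ (β - 1)) / A * (1 - δ) * (1 + t * (1 - s) ^ β / A) ^ (1 - δ - 1) / (1 - δ))), ?_, ?_⟩
  · simp only [hΦ, hB]
    exact h8
  -- t-derivative
  have k1 : HasDerivAt (fun t' : ℝ => 1 + t' * (1 - s) ^ β / A) (1 * (1 - s) ^ β / A) t :=
    (((hasDerivAt_id t).mul_const ((1 - s) ^ β)).div_const A).const_add 1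
  have k2 : HasDerivAt (fun t' : ℝ => (1 + t' * (1 - s) ^ β / A) ^ (1 - δ))
      ((1 * (1 - s) ^ β / A) * (1 - δ) * (1 + t * (1 - s) ^ β / A) ^ (1 - δ - 1)) t :=
    k1.rpow_const (Or.inl hE0.ne')
  have k3 := (k2.sub_const 1).div_const (1 - δ)
  have k4 := (k3.const_mul (-(θ * A) * (1 - s) ^ (γ - β))).exp
  simp only [hΦ, hB, hφ, hf]
  convert k4 using 1
  -- algebraic identity
  have hEsplit : (1 + t * (1 - s) ^ β / A) ^ ((1:ℝ) - δ)
      = (1 + t * (1 - s) ^ β / A) * (1 + t * (1 - s) ^ β / A) ^ ((1:ℝ) - δ - 1) := by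
    have h := Real.rpow_add hE0 1 (1 - δ - 1)
    rw [Real.rpow_one] at h
    rw [← h]
    congr 1
    ring
  have e1 : (1 - s) ^ (γ - β) = (1 - s) ^ γ / (1 - s) ^ β := Real.rpow_sub hu γ β
  have e2 : (1 - s) ^ (γ - β - 1) = (1 - s) ^ γ / (1 - s) ^ β / (1 - s) := by
    rw [Real.rpow_sub hu (γ - β) 1, Real.rpow_one, e1]
  have e3 : (1 - s) ^ (β - 1) = (1 - s) ^ β / (1 - s) := by
    rw [Real.rpow_sub hu β 1, Real.rpow_one]
  have e4 : (1 - s) ^ ((1:ℝ) + β) = (1 - s) * (1 - s) ^ β := by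
    rw [Real.rpow_add hu 1 β, Real.rpow_one]
  have hw : (0:ℝ) < (1 - s) ^ β := Real.rpow_pos_of_pos hu β
  have hrel : γ - β = -β * (1 - δ) := by
    rw [hδ]; field_simp; ring
  set P := rexp (-(θ * A) * (1 - s) ^ (γ - β) * (((1 + t * (1 - s) ^ β / A) ^ (1 - δ) - 1) / (1 - δ))) with hP
  rw [hEsplit, e1, e2, e3, e4, hrel]
  set q := (1 + t * (1 - s) ^ β / A) ^ ((1:ℝ) - δ - 1) with hq
  field_simp
  ring
end

section
/- Let 0 < β < 1, θ > 0, A > 0. With normalization z = z(t) = (A/t)^{1/β}, the function Ψ(t,λ) = (1 + (1 - e^{-λz})^β · t/A)^{-θA} converges, as t → ∞, to (1/(1+λ^β))^{θA} for every λ > 0. -/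
open Real Filter Topology

/-! After the substitution `u = z(t) = (A/t)^(1/β)`, which tends to `0⁺`, one has
`(1 - e^{-λu})^β · t/A = ((1 - e^{-λu}) / u)^β`, and `(1 - e^{-λu}) / u → λ` is the derivative
of `u ↦ 1 - e^{-λu}` at `0`. Continuity of `x ↦ (1 + x^β)^{-θA}` at `λ > 0` finishes the proof. -/

theorem tendsto_one_sub_exp_neg_mul_div (c : ℝ) :
    Tendsto (fun u : ℝ => (1 - exp (-c * u)) / u) (𝓝[≠] 0) (𝓝 c) := by
  have hderiv : HasDerivAt (fun u : ℝ => 1 - exp (-c * u)) c 0 := by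
    simpa using ((hasDerivAt_id (0 : ℝ)).const_mul (-c)).exp.const_sub 1
  refine (hasDerivAt_iff_tendsto_slope_zero.mp hderiv).congr fun u => ?_
  simp [div_eq_inv_mul]

theorem tendsto_div_rpow_atTop_nhdsGT_zero {A r : ℝ} (hA : 0 < A) (hr : 0 < r) :
    Tendsto (fun t : ℝ => (A / t) ^ r) atTop (𝓝[>] 0) := by
  refine tendsto_nhdsWithin_iff.mpr ⟨?_, ?_⟩
  · simpa [zero_rpow hr.ne'] using
      (tendsto_const_nhds.div_atTop tendsto_id : Tendsto (fun t : ℝ => A / t) atTop (𝓝 0)).rpow_const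
        (Or.inr hr.le)
  · filter_upwards [eventually_gt_atTop 0] with t ht
    exact rpow_pos_of_pos (div_pos hA ht) r

theorem div_rpow_one_div_rpow {x a β : ℝ} (hx : 0 ≤ x) (ha : 0 ≤ a) (hβ : β ≠ 0) :
    (x / a ^ (1 / β)) ^ β = x ^ β / a := by
  rw [div_rpow hx (rpow_nonneg ha _), ← rpow_mul ha, one_div_mul_cancel hβ, rpow_one]

theorem one_div_rpow_eq_rpow_neg {x : ℝ} (hx : 0 ≤ x) (p : ℝ) : (1 / x) ^ p = x ^ (-p) := by
  rw [one_div, inv_rpow hx, rpow_neg hx]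

theorem linnik_limit_gamma_eq_beta_general
    (β θ A : ℝ) (hβ : 0 < β) (hA : 0 < A) :
    ∀ lam : ℝ, 0 < lam →
      Tendsto (fun t : ℝ =>
          (1 + (1 - Real.exp (-lam * (A / t) ^ (1 / β))) ^ β * t / A) ^ (-(θ * A)))
        atTop (nhds ((1 / (1 + lam ^ β)) ^ (θ * A))) := by
  intro lam hlam
  have hpos : 0 < 1 + lam ^ β := by positivity
  have hcont : ContinuousAt (fun x : ℝ => (1 + x ^ β) ^ (-(θ * A))) lam :=
    (continuousAt_const.add (continuousAt_id.rpow_const (Or.inl hlam.ne'))).rpow_const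
      (Or.inl hpos.ne')
  have hslope := (tendsto_one_sub_exp_neg_mul_div lam).mono_left
    (nhdsWithin_mono 0 fun u (hu : 0 < u) => hu.ne')
  have hlim := (hcont.tendsto.comp hslope).comp
    (tendsto_div_rpow_atTop_nhdsGT_zero hA (one_div_pos.mpr hβ))
  rw [one_div_rpow_eq_rpow_neg hpos.le]
  refine hlim.congr' ?_
  filter_upwards [eventually_gt_atTop 0] with t ht
  have hAt : 0 < A / t := div_pos hA ht
  have hnum : 0 ≤ 1 - exp (-lam * (A / t) ^ (1 / β)) := by
    rw [sub_nonneg, exp_le_one_iff, neg_mul, neg_nonpos]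
    exact mul_nonneg hlam.le (rpow_nonneg hAt.le _)
  simp only [Function.comp_apply, div_rpow_one_div_rpow hnum hAt.le hβ.ne', div_div_eq_mul_div]

theorem linnik_limit_gamma_eq_beta
    (β θ A : ℝ) (hβ : 0 < β) (hβ1 : β < 1) (hθ : 0 < θ) (hA : 0 < A) :
    ∀ lam : ℝ, 0 < lam →
      Tendsto (fun t : ℝ =>
          (1 + (1 - Real.exp (-lam * (A / t) ^ (1 / β))) ^ β * t / A) ^ (-(θ * A)))
        atTop (nhds ((1 / (1 + lam ^ β)) ^ (θ * A))) :=
  linnik_limit_gamma_eq_beta_general β θ A hβ hA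
end

section
/- Let 0 < β < γ ≤ 1, θ > 0, A > 0, δ = γ/β > 1, and Φ(t,s) = exp( -θA(1-s)^{γ-β}(1 - B(t,s)^{-(δ-1)})/(δ-1) ) with B(t,s) = 1 + t(1-s)^β/A. With normalization z = z(t) = (A/t)^{1/β}, for every λ > 0, lim_{t→∞} Φ(t, e^{-λz}) = 1. -/
/-!
The exponent of `Φ(t, s)` is `-θA (1 - s)^(γ-β) · (1 - B^(-(δ-1)))/(δ-1)`. Since `B ≥ 1`, the second
factor lies in `[0, 1/(δ-1)]`, while along `s = exp(-λ z(t))` with `z(t) → 0` we have `1 - s → 0`, so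
`(1 - s)^(γ-β) → 0` because `γ > β`. Hence the exponent tends to `0` and `Φ → 1`.
-/

open Real Filter Topology

lemma tendsto_div_rpow_atTop_zero (A : ℝ) {p : ℝ} (hp : 0 < p) :
    Tendsto (fun t : ℝ => (A / t) ^ p) atTop (𝓝 0) := by
  have hA : Tendsto (fun t : ℝ => A / t) atTop (𝓝 0) := tendsto_const_nhds.div_atTop tendsto_id
  have h := (continuousAt_rpow_const 0 p (Or.inr hp.le)).tendsto.comp hA
  rwa [zero_rpow hp.ne'] at h

lemma tendsto_one_sub_exp_neg_mul_div_rpow_atTop_zero (lam A : ℝ) {p : ℝ} (hp : 0 < p) :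
    Tendsto (fun t : ℝ => 1 - exp (-lam * (A / t) ^ p)) atTop (𝓝 0) := by
  have hexponent := (tendsto_div_rpow_atTop_zero A hp).const_mul (-lam)
  rw [mul_zero] at hexponent
  have hexp := (continuous_exp.tendsto 0).comp hexponent
  rw [exp_zero] at hexp
  simpa using (tendsto_const_nhds (x := (1 : ℝ))).sub hexp

lemma exp_neg_mul_rpow_le_one {lam x : ℝ} (hlam : 0 ≤ lam) (hx : 0 ≤ x) (p : ℝ) :
    exp (-lam * x ^ p) ≤ 1 := by
  have : 0 ≤ lam * x ^ p := mul_nonneg hlam (rpow_nonneg hx p)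
  exact exp_le_one_iff.mpr (by linarith)

lemma norm_one_sub_rpow_neg_div_le {b q : ℝ} (hb : 1 ≤ b) (hq : 0 < q) :
    ‖(1 - b ^ (-q)) / q‖ ≤ 1 / q := by
  have hpos : 0 < b ^ (-q) := rpow_pos_of_pos (by linarith) _
  have hle : b ^ (-q) ≤ 1 := rpow_le_one_of_one_le_of_nonpos hb (by linarith)
  rw [norm_div, Real.norm_of_nonneg (by linarith), Real.norm_of_nonneg hq.le]
  exact div_le_div_of_nonneg_right (by linarith) hq.le

theorem degenerate_limit_beta_lt_gamma_beta_norm_general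
    (β γ θ A δ : ℝ) (hβ : 0 < β) (hβγ : β < γ)
    (hA : 0 < A) (hδ : δ = γ / β)
    (B Φ : ℝ → ℝ → ℝ)
    (hB : ∀ t s, B t s = 1 + t * (1 - s) ^ β / A)
    (hΦ : ∀ t s, Φ t s = Real.exp (-(θ * A) * (1 - s) ^ (γ - β) * ((1 - B t s ^ (-(δ - 1))) / (δ - 1)))) :
    ∀ lam : ℝ, 0 < lam →
      Tendsto (fun t : ℝ => Φ t (Real.exp (-lam * (A / t) ^ (1 / β))))
        atTop (nhds 1) := by
  intro lam hlam
  set s : ℝ → ℝ := fun t => exp (-lam * (A / t) ^ (1 / β))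
  have hδ1 : 0 < δ - 1 := by
    rw [hδ, sub_pos]
    exact (one_lt_div hβ).mpr hβγ
  have hpow : Tendsto (fun t => (1 - s t) ^ (γ - β)) atTop (𝓝 0) := by
    have h := (continuousAt_rpow_const 0 (γ - β) (Or.inr (sub_pos.mpr hβγ).le)).tendsto.comp
      (tendsto_one_sub_exp_neg_mul_div_rpow_atTop_zero lam A (one_div_pos.mpr hβ))
    rwa [zero_rpow (sub_pos.mpr hβγ).ne'] at h
  have hbdd : IsBoundedUnder (· ≤ ·) atTop
      (fun t => ‖(1 - B t (s t) ^ (-(δ - 1))) / (δ - 1)‖) := by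
    refine isBoundedUnder_of_eventually_le (a := 1 / (δ - 1)) ?_
    filter_upwards [eventually_ge_atTop 0] with t ht
    have hs : s t ≤ 1 := exp_neg_mul_rpow_le_one hlam.le (div_nonneg hA.le ht) _
    have hBt : 1 ≤ B t (s t) := by
      rw [hB]
      have : 0 ≤ t * (1 - s t) ^ β / A := by
        have := rpow_nonneg (sub_nonneg.mpr hs) β
        positivity
      linarith
    exact norm_one_sub_rpow_neg_div_le hBt hδ1
  have hexponent := (hpow.zero_mul_isBoundedUnder_le hbdd).const_mul (-(θ * A))
  rw [mul_zero] at hexponent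
  have hlim := (continuous_exp.tendsto 0).comp hexponent
  rw [exp_zero] at hlim
  refine hlim.congr fun t => ?_
  rw [hΦ, Function.comp_apply, mul_assoc]

theorem degenerate_limit_beta_lt_gamma_beta_norm
    (β γ θ A δ : ℝ) (hβ : 0 < β) (hβγ : β < γ) (hγ1 : γ ≤ 1)
    (hθ : 0 < θ) (hA : 0 < A) (hδ : δ = γ / β)
    (B Φ : ℝ → ℝ → ℝ)
    (hB : ∀ t s, B t s = 1 + t * (1 - s) ^ β / A)
    (hΦ : ∀ t s, Φ t s = Real.exp (-(θ * A) * (1 - s) ^ (γ - β) * ((1 - B t s ^ (-(δ - 1))) / (δ - 1)))) :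
    ∀ lam : ℝ, 0 < lam →
      Tendsto (fun t : ℝ => Φ t (Real.exp (-lam * (A / t) ^ (1 / β))))
        atTop (nhds 1) :=
  degenerate_limit_beta_lt_gamma_beta_norm_general β γ θ A δ hβ hβγ hA hδ B Φ hB hΦ
end
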